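/- arXiv:2011.14781 — 3 statements merged into one kernel-verified Lean document; each statement's English description precedes it below -/
import Mathlib

section
/- For X in the Stiefel manifold (X^T X = I_p) and any matrix G in R^{n×p}, the squared Frobenius norm of G - X G^T X equals the squared Frobenius norm of (I_n - X X^T) G plus the squared Frobenius norm of X^T G - G^T X. -/
/-!
Writing `A = XᵀG`, one has `G - X Gᵀ X = (1 - X Xᵀ) G + X (A - Aᵀ)`. The first summand has
columns orthogonal to the range of `X`, so the two summands are Frobenius-orthogonal, and
multiplication by `X` is a Frobenius isometry because `Xᵀ X = 1`; Pythagoras gives the identity.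
-/

open Matrix BigOperators

noncomputable def frobSq {m n : Type*} [Fintype m] [Fintype n] (A : Matrix m n ℝ) : ℝ :=
  ∑ i, ∑ j, (A i j) ^ 2

section Frobenius

variable {l m n : Type*} [Fintype l] [Fintype m] [Fintype n]

lemma frobSq_eq_trace (A : Matrix m n ℝ) : frobSq A = (Aᵀ * A).trace := by
  simp only [frobSq, trace, diag, mul_apply, transpose_apply, sq]
  exact Finset.sum_comm

lemma frobSq_add_of_transpose_mul_eq_zero {A B : Matrix m n ℝ} (h : Aᵀ * B = 0) :
    frobSq (A + B) = frobSq A + frobSq B := by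
  have h' : Bᵀ * A = 0 := by
    simpa only [transpose_mul, transpose_transpose, transpose_zero] using congrArg transpose h
  simp only [frobSq_eq_trace, transpose_add, Matrix.add_mul, Matrix.mul_add, h, h',
    trace_add, trace_zero]
  ring

lemma one_sub_mul_transpose_mul_eq_zero [DecidableEq m] [DecidableEq n] {X : Matrix m n ℝ}
    (hX : Xᵀ * X = 1) : (1 - X * Xᵀ) * X = 0 := by
  rw [Matrix.sub_mul, Matrix.one_mul, Matrix.mul_assoc, hX, Matrix.mul_one, sub_self]

lemma frobSq_mul_of_transpose_mul_self_eq_one [DecidableEq n] {X : Matrix m n ℝ}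
    (hX : Xᵀ * X = 1) (M : Matrix n l ℝ) : frobSq (X * M) = frobSq M := by
  rw [frobSq_eq_trace, frobSq_eq_trace, transpose_mul, Matrix.mul_assoc, ← Matrix.mul_assoc Xᵀ,
    hX, Matrix.one_mul]

end Frobenius

theorem stmt_0 (n p : ℕ) (X G : Matrix (Fin n) (Fin p) ℝ) (hX : Xᵀ * X = 1) :
    frobSq (G - X * Gᵀ * X) =
      frobSq ((1 - X * Xᵀ) * G) + frobSq (Xᵀ * G - Gᵀ * X) := by
  have hdecomp : G - X * Gᵀ * X = (1 - X * Xᵀ) * G + X * (Xᵀ * G - Gᵀ * X) := by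
    simp only [Matrix.sub_mul, Matrix.mul_sub, Matrix.one_mul, Matrix.mul_assoc]
    abel
  have horth : ((1 - X * Xᵀ) * G)ᵀ * (X * (Xᵀ * G - Gᵀ * X)) = 0 := by
    have hsymm : (1 - X * Xᵀ)ᵀ = 1 - X * Xᵀ := by
      rw [transpose_sub, transpose_one, transpose_mul, transpose_transpose]
    rw [transpose_mul, hsymm, Matrix.mul_assoc, ← Matrix.mul_assoc (1 - X * Xᵀ),
      one_sub_mul_transpose_mul_eq_zero hX, Matrix.zero_mul, Matrix.mul_zero]
  rw [hdecomp, frobSq_add_of_transpose_mul_eq_zero horth,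
    frobSq_mul_of_transpose_mul_self_eq_one hX]
end

section
/- Let U, V ∈ R^{p×p} be orthogonal, Σ diagonal with nonnegative entries, Σ̂ = Σ V^T U, Γ = (Σ̂ + Σ̂^T)/2. Then tr(Σ^2) - tr(Γ^2) ≤ 2 ‖Σ‖_2 · tr(Σ + Γ), where ‖Σ‖_2 is the spectral norm (the largest diagonal entry of Σ). -/
/-!
Write `S = diagonal d` and `W = Vᵀ U`, which is orthogonal, so `|W i i| ≤ 1`. The diagonal of
`Γ` is then `d i * W i i`, hence `|Γ i i| ≤ d i`. Since `Γ` is symmetric,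
`tr (Γ * Γ) = ∑ i j, Γ i j ^ 2 ≥ ∑ i, Γ i i ^ 2`, and the claim follows by summing the scalar
inequality `s ^ 2 - g ^ 2 = (s + g) (s - g) ≤ (s + g) · 2M`, valid for `|g| ≤ s ≤ M`.
-/

open Matrix

lemma sq_sub_sq_le_two_mul_mul_add {s g M : ℝ} (hg : |g| ≤ s) (hs : s ≤ M) :
    s ^ 2 - g ^ 2 ≤ 2 * M * (s + g) := by
  obtain ⟨hg₁, hg₂⟩ := abs_le.mp hg
  nlinarith [mul_nonneg (by linarith : 0 ≤ s + g) (by linarith : 0 ≤ 2 * M - s + g)]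

namespace Matrix

variable {n : Type*} [Fintype n]

lemma abs_apply_le_one_of_transpose_mul_self_eq_one [DecidableEq n] {W : Matrix n n ℝ}
    (hW : Wᵀ * W = 1) (i j : n) : |W i j| ≤ 1 := by
  have hW' : W ∈ unitaryGroup n ℝ := by
    rwa [mem_unitaryGroup_iff', star_eq_conjTranspose, conjTranspose_eq_transpose_of_trivial]
  simpa only [Real.norm_eq_abs] using entry_norm_bound_of_unitary hW' i j

lemma IsSymm.sum_sq_diag_le_trace_mul_self {A : Matrix n n ℝ} (hA : A.IsSymm) :
    ∑ i, A i i ^ 2 ≤ trace (A * A) := by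
  refine Finset.sum_le_sum fun i _ => ?_
  have hrow : (A * A) i i = ∑ k, A i k ^ 2 := by
    simp only [mul_apply, sq, hA.apply i]
  rw [diag_apply, hrow]
  exact Finset.single_le_sum (f := fun k => A i k ^ 2) (fun k _ => sq_nonneg _)
    (Finset.mem_univ i)

variable [DecidableEq n]

lemma symmPart_diagonal_mul_apply_self (d : n → ℝ) (W : Matrix n n ℝ) (i : n) :
    ((1 / 2 : ℝ) • (diagonal d * W + (diagonal d * W)ᵀ)) i i = d i * W i i := by
  simp only [smul_apply, add_apply, transpose_apply, diagonal_mul, smul_eq_mul]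
  ring

lemma trace_sq_sub_trace_sq_symmPart_le {d : n → ℝ} (hd : ∀ i, 0 ≤ d i) {M : ℝ}
    (hM : ∀ i, d i ≤ M) {W Γ : Matrix n n ℝ} (hW : Wᵀ * W = 1)
    (hΓ : Γ = (1 / 2 : ℝ) • (diagonal d * W + (diagonal d * W)ᵀ)) :
    trace (diagonal d * diagonal d) - trace (Γ * Γ) ≤ 2 * M * trace (diagonal d + Γ) := by
  have hΓsymm : Γ.IsSymm := by
    simp only [hΓ, IsSymm, transpose_smul, transpose_add, transpose_transpose, add_comm]
  have hΓdiag (i : n) : |Γ i i| ≤ d i := by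
    rw [hΓ, symmPart_diagonal_mul_apply_self, abs_mul, abs_of_nonneg (hd i)]
    exact mul_le_of_le_one_right (hd i) (abs_apply_le_one_of_transpose_mul_self_eq_one hW i i)
  calc trace (diagonal d * diagonal d) - trace (Γ * Γ)
      ≤ ∑ i, (d i ^ 2 - Γ i i ^ 2) := by
        rw [diagonal_mul_diagonal, trace_diagonal, Finset.sum_sub_distrib]
        have hΓtrace := hΓsymm.sum_sq_diag_le_trace_mul_self
        simp only [sq] at hΓtrace ⊢
        linarith
    _ ≤ ∑ i, 2 * M * (d i + Γ i i) :=
        Finset.sum_le_sum fun i _ => sq_sub_sq_le_two_mul_mul_add (hΓdiag i) (hM i)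
    _ = 2 * M * trace (diagonal d + Γ) := by
        simp only [trace, diag_apply, add_apply, diagonal_apply_eq, Finset.mul_sum]

end Matrix

theorem stmt_6 (p : ℕ) (hp : 0 < p) (U V S Sh Γ : Matrix (Fin p) (Fin p) ℝ)
    (hU : Uᵀ * U = 1) (hV : Vᵀ * V = 1)
    (hSd : ∀ i j, i ≠ j → S i j = 0) (hS0 : ∀ i, 0 ≤ S i i)
    (hSh : Sh = S * Vᵀ * U) (hΓ : Γ = ((1 : ℝ) / 2) • (Sh + Shᵀ)) :
    Matrix.trace (S * S) - Matrix.trace (Γ * Γ) ≤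
      2 * (Finset.univ.sup' ⟨⟨0, hp⟩, Finset.mem_univ _⟩ fun i => S i i) *
        Matrix.trace (S + Γ) := by
  have hSdiag : diagonal (fun i => S i i) = S := IsDiag.diagonal_diag fun i j hij => hSd i j hij
  have hW : (Vᵀ * U)ᵀ * (Vᵀ * U) = 1 := by
    rw [transpose_mul, transpose_transpose, Matrix.mul_assoc, ← Matrix.mul_assoc V,
      mul_eq_one_comm.mp hV, Matrix.one_mul, hU]
  have hΓ' : Γ = (1 / 2 : ℝ) • (diagonal (fun i => S i i) * (Vᵀ * U) +
      (diagonal (fun i => S i i) * (Vᵀ * U))ᵀ) := by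
    rw [hSdiag, ← Matrix.mul_assoc, ← hSh, hΓ]
  have key := trace_sq_sub_trace_sq_symmPart_le hS0
    (M := Finset.univ.sup' ⟨⟨0, hp⟩, Finset.mem_univ _⟩ fun i => S i i)
    (fun i => Finset.le_sup' (fun i => S i i) (Finset.mem_univ i)) hW hΓ'
  rwa [hSdiag] at key
end

section
/- Let X̄ ∈ R^{n×p} have orthonormal columns, G ∈ R^{n×p}, let Z = X̄^T G - γ I_p have SVD U Σ V^T, Q = -U V^T, X⁺ = X̄ Q. Then 8 c_γ · tr(Σ + U Σ V^T) ≥ ‖X̄^T G - G^T X̄‖_F^2, where c_γ = ‖X̄^T G‖_2 + γ (in particular this holds with c_γ = M + γ whenever ‖G‖_2 ≤ M). -/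
open Matrix BigOperators

attribute [local instance] Matrix.instL2OpNormedAddCommGroup

/-! Put `Z = U Σ Vᵀ` and `W = Vᵀ U`. Since `U Σ Uᵀ` is symmetric, the skew part
`X̄ᵀG - GᵀX̄ = Z - Zᵀ` equals `Y - Yᵀ` for `Y = Z + U Σ Uᵀ = U Σ (Vᵀ + Uᵀ)`, so its squared
Frobenius norm is at most `4 ‖Y‖_F² = 8 tr(Σ² (I + W))`. Every singular value is at most
`‖Z‖₂ ≤ ‖X̄ᵀG‖₂ + γ = c_γ`, and the diagonal of `I + W` is nonnegative because `W` is orthogonal;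
hence `8 tr(Σ² (I + W)) ≤ 8 c_γ tr(Σ (I + W)) = 8 c_γ tr(Σ + Z)`. -/

section Frobenius

variable {m n : Type*} [Fintype m] [Fintype n]

lemma frobSq_transpose (A : Matrix m n ℝ) : frobSq Aᵀ = frobSq A := by
  simp only [frobSq, transpose_apply]
  exact Finset.sum_comm

lemma frobSq_sub_le (A B : Matrix m n ℝ) : frobSq (A - B) ≤ 2 * frobSq A + 2 * frobSq B := by
  simp only [frobSq, Matrix.sub_apply, Finset.mul_sum, ← Finset.sum_add_distrib]
  gcongr with i _ j _
  nlinarith [sq_nonneg (A i j + B i j)]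

lemma frobSq_sub_transpose_le (A : Matrix n n ℝ) : frobSq (A - Aᵀ) ≤ 4 * frobSq A := by
  linarith [frobSq_sub_le A Aᵀ, frobSq_transpose A]

lemma frobSq_eq_trace_mul_transpose (A : Matrix m n ℝ) : frobSq A = trace (A * Aᵀ) := by
  simp [frobSq, trace, mul_apply, sq]

end Frobenius

namespace Matrix

section L2OpNorm

variable {𝕜 : Type*} [RCLike 𝕜] {m n : Type*} [Fintype m] [Fintype n] [DecidableEq n]

lemma norm_apply_le_l2_opNorm (A : Matrix m n 𝕜) (i : m) (j : n) : ‖A i j‖ ≤ ‖A‖ := by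
  have h := l2_opNorm_mulVec A (EuclideanSpace.single j 1)
  calc ‖A i j‖ = ‖(EuclideanSpace.equiv m 𝕜).symm (A *ᵥ EuclideanSpace.single j 1) i‖ := by
        simp
    _ ≤ _ := PiLp.norm_apply_le _ i
    _ ≤ ‖A‖ := by simpa using h

lemma l2_opNorm_diagonal_const_le (a : 𝕜) : ‖(diagonal fun _ : n => a)‖ ≤ ‖a‖ := by
  rw [l2_opNorm_diagonal]
  exact pi_norm_const_le a

lemma l2_opNorm_le_one_of_conjTranspose_mul_self (U : Matrix m n 𝕜) (hU : Uᴴ * U = 1) :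
    ‖U‖ ≤ 1 := by
  have hone : ‖(1 : Matrix n n 𝕜)‖ ≤ 1 := by
    simpa using l2_opNorm_diagonal_const_le (n := n) (1 : 𝕜)
  have := l2_opNorm_conjTranspose_mul_self U
  rw [hU] at this
  nlinarith [norm_nonneg U]

end L2OpNorm

variable {n : Type*} [Fintype n] [DecidableEq n]

lemma l2_opNorm_le_one_of_transpose_mul_self {U : Matrix n n ℝ} (hU : Uᵀ * U = 1) : ‖U‖ ≤ 1 :=
  l2_opNorm_le_one_of_conjTranspose_mul_self U (by rwa [conjTranspose_eq_transpose_of_trivial])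

lemma abs_apply_le_one_of_transpose_mul_self {W : Matrix n n ℝ} (hW : Wᵀ * W = 1) (i j : n) :
    |W i j| ≤ 1 :=
  (norm_apply_le_l2_opNorm W i j).trans (l2_opNorm_le_one_of_transpose_mul_self hW)

lemma le_l2_opNorm_mul_diagonal_mul_transpose {U V : Matrix n n ℝ} (hU : Uᵀ * U = 1)
    (hV : Vᵀ * V = 1) (σ : n → ℝ) (i : n) : σ i ≤ ‖U * diagonal σ * Vᵀ‖ := by
  have hUt : ‖Uᵀ‖ ≤ 1 := l2_opNorm_le_one_of_transpose_mul_self (by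
    rw [transpose_transpose]; exact mul_eq_one_comm.mp hU)
  have hdiag : diagonal σ = Uᵀ * (U * diagonal σ * Vᵀ) * V := by
    simp only [← mul_assoc, hU, one_mul]; rw [mul_assoc, hV, mul_one]
  calc σ i ≤ ‖diagonal σ i i‖ := by simpa using Real.le_norm_self _
    _ ≤ ‖diagonal σ‖ := norm_apply_le_l2_opNorm _ i i
    _ = ‖Uᵀ * (U * diagonal σ * Vᵀ) * V‖ := by rw [← hdiag]
    _ ≤ ‖Uᵀ‖ * ‖U * diagonal σ * Vᵀ‖ * ‖V‖ := by
      grw [l2_opNorm_mul (Uᵀ * (U * diagonal σ * Vᵀ)) V, l2_opNorm_mul Uᵀ (U * diagonal σ * Vᵀ)]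
    _ ≤ 1 * ‖U * diagonal σ * Vᵀ‖ * 1 := by
      gcongr
      exact l2_opNorm_le_one_of_transpose_mul_self hV
    _ = ‖U * diagonal σ * Vᵀ‖ := by ring

lemma trace_diagonal_mul (σ : n → ℝ) (M : Matrix n n ℝ) :
    trace (diagonal σ * M) = ∑ i, σ i * M i i := by
  simp [trace, diagonal_mul]

lemma trace_diagonal_sq_mul_le {σ : n → ℝ} {c : ℝ} (hσ0 : ∀ i, 0 ≤ σ i) (hσc : ∀ i, σ i ≤ c)
    {M : Matrix n n ℝ} (hM : ∀ i, 0 ≤ M i i) :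
    trace (diagonal (σ ^ 2) * M) ≤ c * trace (diagonal σ * M) := by
  rw [trace_diagonal_mul, trace_diagonal_mul, Finset.mul_sum]
  refine Finset.sum_le_sum fun i _ => ?_
  rw [Pi.pow_apply]
  nlinarith [mul_nonneg (mul_nonneg (hσ0 i) (sub_nonneg.2 (hσc i))) (hM i)]

end Matrix

section SVD

variable {n : Type*} [Fintype n] [DecidableEq n]

lemma frobSq_mul_diagonal_mul_add_transpose {U V : Matrix n n ℝ} (hU : Uᵀ * U = 1)
    (hV : Vᵀ * V = 1) (σ : n → ℝ) :
    frobSq (U * diagonal σ * (Vᵀ + Uᵀ)) = 2 * trace (diagonal (σ ^ 2) * (1 + Vᵀ * U)) := by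
  have hgram : (Vᵀ + Uᵀ) * (V + U) = 2 + Vᵀ * U + (Vᵀ * U)ᵀ := by
    simp only [add_mul, mul_add, hU, hV, transpose_mul, transpose_transpose]
    rw [← one_add_one_eq_two]
    abel
  have hconj : (U * diagonal σ * (Vᵀ + Uᵀ)) * (U * diagonal σ * (Vᵀ + Uᵀ))ᵀ
      = U * (diagonal σ * ((Vᵀ + Uᵀ) * (V + U)) * diagonal σ) * Uᵀ := by
    simp only [transpose_mul, transpose_add, transpose_transpose, diagonal_transpose, mul_assoc]
  rw [frobSq_eq_trace_mul_transpose, hconj, trace_mul_comm, ← mul_assoc, ← mul_assoc, hU, one_mul,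
    trace_mul_comm, ← mul_assoc, diagonal_mul_diagonal, hgram, trace_diagonal_mul,
    trace_diagonal_mul, Finset.mul_sum]
  refine Finset.sum_congr rfl fun i _ => ?_
  simp only [Matrix.add_apply, transpose_apply, one_apply_eq, ofNat_apply, ↓reduceIte, Pi.pow_apply]
  ring

lemma frobSq_sub_transpose_le_of_svd {U V : Matrix n n ℝ} (hU : Uᵀ * U = 1) (hV : Vᵀ * V = 1)
    {σ : n → ℝ} {c : ℝ} (hσ0 : ∀ i, 0 ≤ σ i) (hσc : ∀ i, σ i ≤ c) :
    frobSq (U * diagonal σ * Vᵀ - (U * diagonal σ * Vᵀ)ᵀ) ≤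
      8 * c * trace (diagonal σ + U * diagonal σ * Vᵀ) := by
  set Y := U * diagonal σ * (Vᵀ + Uᵀ)
  have hskew : U * diagonal σ * Vᵀ - (U * diagonal σ * Vᵀ)ᵀ = Y - Yᵀ := by
    simp only [Y, mul_add, transpose_add, transpose_mul, transpose_transpose, diagonal_transpose,
      mul_assoc]
    abel
  have htrace : trace (diagonal σ + U * diagonal σ * Vᵀ) = trace (diagonal σ * (1 + Vᵀ * U)) := by
    rw [mul_add, mul_one, trace_add, trace_add, trace_mul_cycle, trace_mul_comm (Vᵀ * U)]
  have hdiag : ∀ i, 0 ≤ (1 + Vᵀ * U) i i := fun i => by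
    have hW : (Vᵀ * U)ᵀ * (Vᵀ * U) = 1 := by
      rw [transpose_mul, transpose_transpose, mul_assoc, ← mul_assoc V, mul_eq_one_comm.mp hV,
        one_mul, hU]
    have := abs_apply_le_one_of_transpose_mul_self hW i i
    rw [Matrix.add_apply, one_apply_eq]
    linarith [neg_abs_le ((Vᵀ * U) i i)]
  calc _ = frobSq (Y - Yᵀ) := by rw [hskew]
    _ ≤ 4 * frobSq Y := frobSq_sub_transpose_le Y
    _ = 8 * trace (diagonal (σ ^ 2) * (1 + Vᵀ * U)) := by
      rw [frobSq_mul_diagonal_mul_add_transpose hU hV]; ring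
    _ ≤ 8 * (c * trace (diagonal σ * (1 + Vᵀ * U))) := by
      gcongr; exact trace_diagonal_sq_mul_le hσ0 hσc hdiag
    _ = _ := by rw [htrace]; ring

end SVD

theorem stmt_13_general (n p : ℕ) (γ : ℝ) (hγ : 0 < γ)
    (Xb G : Matrix (Fin n) (Fin p) ℝ)
    (U S V : Matrix (Fin p) (Fin p) ℝ)
    (hU : Uᵀ * U = 1) (hV : Vᵀ * V = 1)
    (hSd : ∀ i j, i ≠ j → S i j = 0) (hS0 : ∀ i, 0 ≤ S i i)
    (hZ : Xbᵀ * G - γ • 1 = U * S * Vᵀ) :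
    frobSq (Xbᵀ * G - Gᵀ * Xb) ≤
      8 * (‖Xbᵀ * G‖ + γ) * Matrix.trace (S + U * S * Vᵀ) := by
  obtain ⟨σ, rfl⟩ : ∃ σ, S = diagonal σ := ⟨S.diag, (IsDiag.diagonal_diag hSd).symm⟩
  have hσ : ∀ i, σ i ≤ ‖Xbᵀ * G‖ + γ := fun i => calc
    σ i ≤ ‖Xbᵀ * G - γ • 1‖ := hZ ▸ le_l2_opNorm_mul_diagonal_mul_transpose hU hV σ i
    _ ≤ ‖Xbᵀ * G‖ + ‖(diagonal fun _ => γ : Matrix (Fin p) (Fin p) ℝ)‖ := by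
      rw [← smul_one_eq_diagonal]; exact norm_sub_le _ _
    _ ≤ ‖Xbᵀ * G‖ + γ := by
      grw [l2_opNorm_diagonal_const_le, Real.norm_of_nonneg hγ.le]
  have hskew : Xbᵀ * G - Gᵀ * Xb = U * diagonal σ * Vᵀ - (U * diagonal σ * Vᵀ)ᵀ := by
    rw [← hZ, transpose_sub, transpose_mul, transpose_transpose, transpose_smul, transpose_one]
    abel
  rw [hskew]
  exact frobSq_sub_transpose_le_of_svd hU hV (by simpa using hS0) hσ

theorem stmt_13 (n p : ℕ) (γ : ℝ) (hγ : 0 < γ)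
    (Xb G : Matrix (Fin n) (Fin p) ℝ)
    (U S V : Matrix (Fin p) (Fin p) ℝ)
    (hXb : Xbᵀ * Xb = 1) (hU : Uᵀ * U = 1) (hV : Vᵀ * V = 1)
    (hSd : ∀ i j, i ≠ j → S i j = 0) (hS0 : ∀ i, 0 ≤ S i i)
    (hZ : Xbᵀ * G - γ • 1 = U * S * Vᵀ) :
    frobSq (Xbᵀ * G - Gᵀ * Xb) ≤
      8 * (‖Xbᵀ * G‖ + γ) * Matrix.trace (S + U * S * Vᵀ) :=
  stmt_13_general n p γ hγ Xb G U S V hU hV hSd hS0 hZ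
end
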